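/- Let a,b,e,f ∈ ℝ. For every point p = (s,t,x,y) ∈ ℝ⁴, the alternating bilinear form ω_{abef}(p) on ℝ⁴ is nondegenerate if and only if be − af ≠ 0. (That is, the 2-form ω_{abef} = a γ∧ds + b γ∧dy + e ds∧dt + f dy∧dt on the Kodaira–Thurston manifold is a symplectic form if and only if be − af ≠ 0.) -/

import Mathlib

/-!
The form `ω_{abef}(p)` is given by a skew-symmetric Gram matrix whose Pfaffian is `be − af`,
so its determinant is `(be − af)²`, and a bilinear form on a finite-dimensional space is
nondegenerate exactly when its Gram matrix is invertible.
-/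

/-- The 2-form `ω_{abef} = a γ∧ds + b γ∧dy + e ds∧dt + f dy∧dt` on ℝ⁴, where
`γ = dx − s dy`, evaluated at the point `p = (s,t,x,y)` on vectors `u, v`. -/
def ωKT (a b e f : ℝ) (p u v : Fin 4 → ℝ) : ℝ :=
  a * ((u 2 - p 0 * u 3) * v 0 - (v 2 - p 0 * v 3) * u 0)
    + b * ((u 2 - p 0 * u 3) * v 3 - (v 2 - p 0 * v 3) * u 3)
    + e * (u 0 * v 1 - u 1 * v 0)
    + f * (u 3 * v 1 - u 1 * v 3)

open Matrix

def ωKTMatrix (a b e f : ℝ) (p : Fin 4 → ℝ) : Matrix (Fin 4) (Fin 4) ℝ :=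
  !![0, e, -a, a * p 0;
     -e, 0, 0, -f;
     a, 0, 0, b;
     -(a * p 0), f, -b, 0]

theorem ωKT_eq_dotProduct_mulVec (a b e f : ℝ) (p u v : Fin 4 → ℝ) :
    ωKT a b e f p u v = u ⬝ᵥ ωKTMatrix a b e f p *ᵥ v := by
  simp only [ωKT, ωKTMatrix, dotProduct, mulVec, Fin.sum_univ_four, of_apply, cons_val',
    cons_val_fin_one, cons_val_zero, cons_val_one, cons_val, Fin.isValue]
  ring

theorem det_ωKTMatrix (a b e f : ℝ) (p : Fin 4 → ℝ) :
    (ωKTMatrix a b e f p).det = (b * e - a * f) ^ 2 := by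
  simp [ωKTMatrix, det_succ_row_zero, Fin.sum_univ_succ, Fin.succAbove]
  ring

/-- `ω_{abef}(p)` is nondegenerate if and only if `be − af ≠ 0`. -/
theorem stmt12 (a b e f : ℝ) (p : Fin 4 → ℝ) :
    (∀ u : Fin 4 → ℝ, (∀ v : Fin 4 → ℝ, ωKT a b e f p u v = 0) → u = 0) ↔
      b * e - a * f ≠ 0 := by
  simp only [ωKT_eq_dotProduct_mulVec]
  rw [← separatingLeft_def, separatingLeft_iff_det_ne_zero, det_ωKTMatrix]
  exact pow_ne_zero_iff two_ne_zero
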